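/- arXiv:2509.21936 — 2 statements merged into one kernel-verified Lean document; each statement's English description precedes it below -/
import Mathlib

section
/- Let f(L) = E[max_{ℓ≤L} χ_ℓ] where χ ~ N(0, I_L). In the max-SLR model at ν = ∞ with deterministic length L, the minimal population risk of linear attention equals 1 − (1 + f(L)²)/L, and since f(L) = O(√(log L)), this risk is 1 − O((log L)/L) as L → ∞. -/
/-!
Integrating out the value noise `ζ`, the tokens `z` and the key noise `ξ` uses only the first two
moments of a standard Gaussian vector, and leaves a risk that depends on the keys `χ` only through
`∑ ℓ (1 + m_k χ_ℓ)²` and the key `χ_ε` at the target position. Since the weight `gMax` puts all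
its mass on the almost surely unique argmax, `χ_ε` becomes `max χ`, whose mean is `f(L)`; the risk
is then the quadratic `1 - 2 m_v (1 + m_k f) + (m_v² + R_v²) L (1 + m_k² + R_k²)`, minimised at
`m_k = f`, `m_v = 1/L`, `R_k = R_v = 0` by Cauchy–Schwarz. For the asymptotics, Jensen's
inequality and a union bound give `exp (t f) ≤ E exp (t max χ) ≤ L exp (t²/2)` for every `t`,
and `t = f` yields `f² ≤ 2 log L`.
-/

open MeasureTheory ProbabilityTheory Real Filter Asymptotics

noncomputable def stdGaussian (L : ℕ) : Measure (Fin L → ℝ) :=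
  Measure.pi fun _ => gaussianReal 0 1

/-- `f(L) = E[max_{ℓ ≤ L} χ_ℓ]` for `χ ~ N(0, I_L)`. -/
noncomputable def fmax (L : ℕ) : ℝ :=
  ∫ χ, (⨆ ℓ : Fin L, χ ℓ) ∂stdGaussian L

/-- Max-SLR weight at `ν = ∞`: `g(ε,χ) = L·1{ε = argmax χ}`. -/
noncomputable def gMax (L : ℕ) (ε : Fin L) (χ : Fin L → ℝ) : ℝ :=
  if ∀ ℓ, ℓ ≠ ε → χ ℓ < χ ε then (L : ℝ) else 0

/-- Population risk of linear attention on max-SLR at `ν = ∞`, on the manifold. -/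
noncomputable def linRiskMax (L : ℕ) (mk mv Rk Rv : ℝ) : ℝ :=
  (L : ℝ)⁻¹ * ∑ ε : Fin L, ∫ χ, ∫ ξ, ∫ z, ∫ ζ,
    gMax L ε χ *
      (z ε - ∑ ℓ, (mv * z ℓ + Rv * ζ ℓ) * (1 + mk * χ ℓ + Rk * ξ ℓ)) ^ 2
    ∂stdGaussian L ∂stdGaussian L ∂stdGaussian L ∂stdGaussian L

open scoped NNReal

lemma integral_sq_gaussianReal_zero (v : ℝ≥0) : ∫ x, x ^ 2 ∂gaussianReal 0 v = v := by
  rw [← variance_of_integral_eq_zero aemeasurable_id' integral_id_gaussianReal,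
    variance_fun_id_gaussianReal]

lemma nullSingletonClass_gaussianReal (μ : ℝ) {v : ℝ≥0} (hv : v ≠ 0) :
    NullSingletonClass (gaussianReal μ v) :=
  ⟨fun x => gaussianReal_absolutelyContinuous μ hv (measure_singleton x)⟩

lemma apply_ciSup_le_sum {ι : Type*} [Fintype ι] [Nonempty ι] {g : ℝ → ℝ} (hg : ∀ t, 0 ≤ g t)
    (x : ι → ℝ) : g (⨆ i, x i) ≤ ∑ i, g (x i) := by
  obtain ⟨i₀, hi₀⟩ := exists_eq_ciSup_of_finite (f := x)
  rw [← hi₀]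
  exact Finset.single_le_sum (fun i _ => hg (x i)) (Finset.mem_univ i₀)

section ProductMeasure

variable {ι : Type*} [Fintype ι] (μ : ι → Measure ℝ) [∀ i, IsProbabilityMeasure (μ i)]
  [∀ i, NullSingletonClass (μ i)]

theorem MeasureTheory.Measure.pi_setOf_eval_eq_eval {i j : ι} (hij : i ≠ j) :
    Measure.pi μ {x | x i = x j} = 0 := by
  have hind : IndepFun (fun x : ι → ℝ => x i) (fun x => x j) (Measure.pi μ) :=
    (iIndepFun_pi (X := fun _ => id) fun _ => aemeasurable_id).indepFun hij
  have hpair : (Measure.pi μ).map (fun x => (x i, x j)) = (μ i).prod (μ j) := by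
    rw [hind.map_prod_eq_prod_map_map (measurable_pi_apply i).aemeasurable
      (measurable_pi_apply j).aemeasurable, (measurePreserving_eval μ i).map_eq,
      (measurePreserving_eval μ j).map_eq]
  have hdiag : (μ i).prod (μ j) (Set.diagonal ℝ) = 0 := by
    rw [Measure.prod_apply measurableSet_diagonal]
    simp [Set.diagonal, measure_singleton]
  rw [← hdiag, ← hpair, Measure.map_apply (by fun_prop) measurableSet_diagonal]
  rfl

theorem MeasureTheory.Measure.ae_injective_pi : ∀ᵐ x ∂Measure.pi μ, Function.Injective x := by
  refine ae_all_iff.2 fun i => ae_all_iff.2 fun j => ?_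
  by_cases hij : i = j
  · exact .of_forall fun _ _ => hij
  · have hne : ∀ᵐ x ∂Measure.pi μ, x i ≠ x j :=
      ae_iff.2 (by simpa using Measure.pi_setOf_eval_eq_eval μ hij)
    exact hne.mono fun x hx h => absurd h hx

end ProductMeasure

section StandardGaussianPi

variable {ι : Type*} [Fintype ι]

local notation "γ[" ι "]" => Measure.pi fun _ : ι => gaussianReal 0 1

lemma memLp_eval_gaussianPi (i : ι) : MemLp (fun x => x i) 2 γ[ι] :=
  (memLp_id_gaussianReal 2).comp_measurePreserving (measurePreserving_eval _ i)

lemma integral_eval_gaussianPi (i : ι) : ∫ x, x i ∂γ[ι] = 0 := by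
  rw [integral_eval]
  exact integral_id_gaussianReal

lemma integral_eval_mul_eval_gaussianPi [DecidableEq ι] (i j : ι) :
    ∫ x, x i * x j ∂γ[ι] = if i = j then 1 else 0 := by
  split_ifs with hij
  · subst hij
    simp_rw [← sq]
    rw [integral_comp_eval (f := fun t => t ^ 2) (by fun_prop), integral_sq_gaussianReal_zero,
      NNReal.coe_one]
  · have hind := (iIndepFun_pi (μ := fun _ : ι => gaussianReal 0 1) (X := fun _ => id)
      fun _ => aemeasurable_id).indepFun hij
    simpa [integral_eval_gaussianPi] using hind.integral_fun_mul_eq_mul_integral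
      (measurable_pi_apply i).aestronglyMeasurable (measurable_pi_apply j).aestronglyMeasurable

lemma memLp_sum_mul_eval_gaussianPi (a : ι → ℝ) : MemLp (fun x => ∑ i, a i * x i) 2 γ[ι] :=
  memLp_finsetSum _ fun i _ => (memLp_eval_gaussianPi i).const_mul (a i)

lemma integral_sum_mul_eval_gaussianPi (a : ι → ℝ) : ∫ x, ∑ i, a i * x i ∂γ[ι] = 0 := by
  rw [integral_finsetSum _ fun i _ => ((memLp_eval_gaussianPi i).integrable one_le_two).const_mul _]
  simp [integral_const_mul, integral_eval_gaussianPi]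

lemma integral_sq_sum_mul_eval_gaussianPi (a : ι → ℝ) :
    ∫ x, (∑ i, a i * x i) ^ 2 ∂γ[ι] = ∑ i, a i ^ 2 := by
  classical
  have hint : ∀ i j : ι, Integrable (fun x : ι → ℝ => x i * x j) γ[ι] := fun i j =>
    (memLp_eval_gaussianPi i).integrable_mul (memLp_eval_gaussianPi j)
  simp_rw [sq, Finset.sum_mul_sum, mul_mul_mul_comm]
  rw [integral_finsetSum _ fun i _ => integrable_finsetSum _ fun j _ => (hint i j).const_mul _]
  simp_rw [integral_finsetSum _ fun j _ => (hint _ j).const_mul _, integral_const_mul,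
    integral_eval_mul_eval_gaussianPi]
  simp

lemma integral_sq_const_add_sum_mul_eval_gaussianPi (c : ℝ) (a : ι → ℝ) :
    ∫ x, (c + ∑ i, a i * x i) ^ 2 ∂γ[ι] = c ^ 2 + ∑ i, a i ^ 2 := by
  have hS := memLp_sum_mul_eval_gaussianPi a
  have hS₁ := hS.integrable one_le_two
  simp_rw [add_sq]
  rw [integral_add (by fun_prop) hS.integrable_sq, integral_add (by fun_prop) (by fun_prop),
    integral_const_mul, integral_sum_mul_eval_gaussianPi, integral_sq_sum_mul_eval_gaussianPi]
  simp

lemma memLp_const_add_mul_eval_gaussianPi (c r : ℝ) (i : ι) :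
    MemLp (fun x => c + r * x i) 2 γ[ι] :=
  (memLp_const c).add ((memLp_eval_gaussianPi i).const_mul r)

lemma integral_const_add_mul_eval_gaussianPi (c r : ℝ) (i : ι) :
    ∫ x, (c + r * x i) ∂γ[ι] = c := by
  rw [integral_add (integrable_const c)
      (((memLp_eval_gaussianPi i).integrable one_le_two).const_mul r),
    integral_const_mul, integral_eval_gaussianPi]
  simp

lemma integrable_sum_sq_const_add_mul_eval_gaussianPi (c : ι → ℝ) (r : ℝ) :
    Integrable (fun x => ∑ i, (c i + r * x i) ^ 2) γ[ι] :=
  integrable_finsetSum _ fun i _ => (memLp_const_add_mul_eval_gaussianPi (c i) r i).integrable_sq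

lemma integral_sum_sq_const_add_mul_eval_gaussianPi (c : ι → ℝ) (r : ℝ) :
    ∫ x, ∑ i, (c i + r * x i) ^ 2 ∂γ[ι] = ∑ i, c i ^ 2 + Fintype.card ι * r ^ 2 := by
  classical
  have hsingle : ∀ i, ∫ x, (c i + r * x i) ^ 2 ∂γ[ι] = c i ^ 2 + r ^ 2 := fun i => by
    simpa [ite_mul] using
      integral_sq_const_add_sum_mul_eval_gaussianPi (c i) (fun j => if j = i then r else 0)
  rw [integral_finsetSum _ fun i _ => (memLp_const_add_mul_eval_gaussianPi (c i) r i).integrable_sq]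
  simp [hsingle, Finset.sum_add_distrib]

lemma integrable_exp_mul_eval_gaussianPi (t : ℝ) (i : ι) :
    Integrable (fun x => exp (t * x i)) γ[ι] :=
  integrable_comp_eval (μ := fun _ : ι => gaussianReal 0 1) (i := i) (f := fun s => exp (t * s))
    (integrable_exp_mul_gaussianReal t)

lemma integral_exp_mul_eval_gaussianPi (t : ℝ) (i : ι) :
    ∫ x, exp (t * x i) ∂γ[ι] = exp (t ^ 2 / 2) := by
  refine (integral_comp_eval (μ := fun _ : ι => gaussianReal 0 1) (i := i)
    (f := fun s => exp (t * s)) (by fun_prop)).trans ?_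
  simpa [mgf] using congrFun (mgf_id_gaussianReal (μ := 0) (v := 1)) t

variable [Nonempty ι]

lemma integrable_iSup_eval_gaussianPi : Integrable (fun x => ⨆ i, x i) γ[ι] :=
  Integrable.mono' (g := fun x => ∑ i, ‖x i‖)
    (integrable_finsetSum _ fun i _ => ((memLp_eval_gaussianPi i).integrable one_le_two).norm)
    (by fun_prop) (.of_forall fun x => apply_ciSup_le_sum (fun t => norm_nonneg t) x)

lemma exp_mul_integral_iSup_le (t : ℝ) :
    exp (t * ∫ x, ⨆ i, x i ∂γ[ι]) ≤ Fintype.card ι * exp (t ^ 2 / 2) := by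
  have hint : ∀ i, Integrable (fun x => exp (t * x i)) γ[ι] := fun i =>
    integrable_exp_mul_eval_gaussianPi t i
  have hle : ∀ x : ι → ℝ, exp (t * ⨆ i, x i) ≤ ∑ i, exp (t * x i) :=
    apply_ciSup_le_sum fun s => (exp_pos (t * s)).le
  have hexp : Integrable (fun x => exp (t * ⨆ i, x i)) γ[ι] :=
    Integrable.mono' (integrable_finsetSum _ fun i _ => hint i) (by fun_prop)
      (.of_forall fun x => by simpa [abs_of_pos (exp_pos _)] using hle x)
  calc exp (t * ∫ x, ⨆ i, x i ∂γ[ι]) = exp (∫ x, t * ⨆ i, x i ∂γ[ι]) := by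
        rw [integral_const_mul]
    _ ≤ ∫ x, exp (t * ⨆ i, x i) ∂γ[ι] :=
        convexOn_exp.map_integral_le continuous_exp.continuousOn isClosed_univ (by simp)
          (integrable_iSup_eval_gaussianPi.const_mul t) hexp
    _ ≤ ∫ x, ∑ i, exp (t * x i) ∂γ[ι] :=
        integral_mono hexp (integrable_finsetSum _ fun i _ => hint i) hle
    _ = Fintype.card ι * exp (t ^ 2 / 2) := by
        simp [integral_finsetSum _ fun i _ => hint i, integral_exp_mul_eval_gaussianPi]

lemma sq_integral_iSup_le_two_mul_log :
    (∫ x, ⨆ i, x i ∂γ[ι]) ^ 2 ≤ 2 * log (Fintype.card ι) := by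
  set f := ∫ x, ⨆ i, x i ∂γ[ι]
  have hcard : (0 : ℝ) < Fintype.card ι := by exact_mod_cast Fintype.card_pos
  have h := log_le_log (exp_pos _) (exp_mul_integral_iSup_le (ι := ι) f)
  rw [log_exp, log_mul hcard.ne' (exp_pos _).ne', log_exp] at h
  linarith

end StandardGaussianPi

section Risk

variable {L : ℕ}

instance isProbabilityMeasure_stdGaussian : IsProbabilityMeasure (stdGaussian L) := by
  unfold _root_.stdGaussian
  infer_instance

lemma integral_valueNoise_sq_residual (mv Rv : ℝ) (A z : Fin L → ℝ) (ε : Fin L) :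
    ∫ ζ, (z ε - ∑ ℓ, (mv * z ℓ + Rv * ζ ℓ) * A ℓ) ^ 2 ∂stdGaussian L
      = (z ε - mv * ∑ ℓ, z ℓ * A ℓ) ^ 2 + Rv ^ 2 * ∑ ℓ, A ℓ ^ 2 := by
  have hres : ∀ ζ : Fin L → ℝ, z ε - ∑ ℓ, (mv * z ℓ + Rv * ζ ℓ) * A ℓ
      = (z ε - mv * ∑ ℓ, z ℓ * A ℓ) + ∑ ℓ, -(Rv * A ℓ) * ζ ℓ := fun ζ => by
    simp only [add_mul, Finset.sum_add_distrib, Finset.mul_sum, neg_mul, Finset.sum_neg_distrib,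
      mul_assoc, mul_comm (ζ _)]
    ring
  simp_rw [hres]
  refine (integral_sq_const_add_sum_mul_eval_gaussianPi _ _).trans ?_
  simp [mul_pow, Finset.mul_sum]

lemma integral_tokens_sq_residual_add (mv K : ℝ) (A : Fin L → ℝ) (ε : Fin L) :
    ∫ z, ((z ε - mv * ∑ ℓ, z ℓ * A ℓ) ^ 2 + K) ∂stdGaussian L
      = 1 - 2 * mv * A ε + mv ^ 2 * ∑ ℓ, A ℓ ^ 2 + K := by
  unfold _root_.stdGaussian
  set b : Fin L → ℝ := fun ℓ => (if ℓ = ε then 1 else 0) - mv * A ℓ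
  have hres : ∀ z : Fin L → ℝ, z ε - mv * ∑ ℓ, z ℓ * A ℓ = ∑ ℓ, b ℓ * z ℓ := fun z => by
    simp only [b, sub_mul, Finset.sum_sub_distrib, ite_mul, one_mul, zero_mul,
      Finset.sum_ite_eq', Finset.mem_univ, if_true, Finset.mul_sum]
    exact congrArg _ (Finset.sum_congr rfl fun _ _ => by ring)
  simp_rw [hres]
  rw [integral_add (memLp_sum_mul_eval_gaussianPi b).integrable_sq (integrable_const K),
    integral_sq_sum_mul_eval_gaussianPi, integral_const]
  simp [b, sub_sq, Finset.sum_add_distrib, Finset.sum_sub_distrib, ite_pow, mul_pow,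
    Finset.mul_sum, ← mul_assoc]

lemma integral_keyNoise_affine_add_mul_sum_sq (mv K Rk : ℝ) (c : Fin L → ℝ) (ε : Fin L) :
    ∫ ξ, (1 - 2 * mv * (c ε + Rk * ξ ε) + K * ∑ ℓ, (c ℓ + Rk * ξ ℓ) ^ 2) ∂stdGaussian L
      = 1 - 2 * mv * c ε + K * (∑ ℓ, c ℓ ^ 2 + L * Rk ^ 2) := by
  unfold _root_.stdGaussian
  have hsq := integrable_sum_sq_const_add_mul_eval_gaussianPi c Rk
  have haff : ∀ ξ : Fin L → ℝ, 1 - 2 * mv * (c ε + Rk * ξ ε) + K * ∑ ℓ, (c ℓ + Rk * ξ ℓ) ^ 2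
      = (1 - 2 * mv * c ε + -(2 * mv * Rk) * ξ ε) + K * ∑ ℓ, (c ℓ + Rk * ξ ℓ) ^ 2 := fun ξ => by
    ring
  simp_rw [haff]
  rw [integral_add ((memLp_const_add_mul_eval_gaussianPi _ _ ε).integrable one_le_two)
      (hsq.const_mul K), integral_const_add_mul_eval_gaussianPi, integral_const_mul,
    integral_sum_sq_const_add_mul_eval_gaussianPi]
  simp

/-- The risk given the keys `χ`, when the target token sits at a key of value `t`. -/
noncomputable def condRisk (L : ℕ) (mk mv Rk Rv : ℝ) (χ : Fin L → ℝ) (t : ℝ) : ℝ :=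
  1 - 2 * mv * (1 + mk * t) + (mv ^ 2 + Rv ^ 2) * (∑ ℓ, (1 + mk * χ ℓ) ^ 2 + L * Rk ^ 2)

lemma integral_integral_integral_sq_residual (mk mv Rk Rv : ℝ) (ε : Fin L) (χ : Fin L → ℝ) :
    ∫ ξ, ∫ z, ∫ ζ, (z ε - ∑ ℓ, (mv * z ℓ + Rv * ζ ℓ) * (1 + mk * χ ℓ + Rk * ξ ℓ)) ^ 2
      ∂stdGaussian L ∂stdGaussian L ∂stdGaussian L = condRisk L mk mv Rk Rv χ (χ ε) := by
  simp_rw [integral_valueNoise_sq_residual, integral_tokens_sq_residual_add,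
    add_assoc _ (mv ^ 2 * _), ← add_mul]
  exact integral_keyNoise_affine_add_mul_sum_sq mv _ Rk (fun ℓ => 1 + mk * χ ℓ) ε

lemma integrable_condRisk (mk mv Rk Rv : ℝ) {T : (Fin L → ℝ) → ℝ}
    (hT : Integrable T (stdGaussian L)) :
    Integrable (fun χ => condRisk L mk mv Rk Rv χ (T χ)) (stdGaussian L) := by
  have hsq : Integrable (fun χ => ∑ ℓ, (1 + mk * χ ℓ) ^ 2) (stdGaussian L) :=
    integrable_sum_sq_const_add_mul_eval_gaussianPi (fun _ => 1) mk
  exact ((integrable_const 1).sub (((integrable_const 1).add (hT.const_mul mk)).const_mul _)).add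
    ((hsq.add (integrable_const _)).const_mul _)

lemma integral_condRisk (mk mv Rk Rv : ℝ) {T : (Fin L → ℝ) → ℝ}
    (hT : Integrable T (stdGaussian L)) :
    ∫ χ, condRisk L mk mv Rk Rv χ (T χ) ∂stdGaussian L
      = 1 - 2 * mv * (1 + mk * ∫ χ, T χ ∂stdGaussian L)
        + (mv ^ 2 + Rv ^ 2) * (L * (1 + mk ^ 2 + Rk ^ 2)) := by
  have hsq : Integrable (fun χ => ∑ ℓ, (1 + mk * χ ℓ) ^ 2) (stdGaussian L) :=
    integrable_sum_sq_const_add_mul_eval_gaussianPi (fun _ => 1) mk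
  have hlin := (integrable_const 1).add (hT.const_mul mk)
  have hsq' : ∫ χ, ∑ ℓ, (1 + mk * χ ℓ) ^ 2 ∂stdGaussian L = L * (1 + mk ^ 2) := by
    refine (integral_sum_sq_const_add_mul_eval_gaussianPi (fun _ => 1) mk).trans ?_
    simp [mul_add]
  unfold condRisk
  rw [integral_add, integral_sub, integral_const_mul, integral_add, integral_const_mul,
    integral_const_mul, integral_add, hsq']
  · simp only [integral_const, probReal_univ, smul_eq_mul, one_mul]
    ring
  all_goals first
    | exact integrable_const _ | exact hsq | exact hT.const_mul _ | exact hlin.const_mul _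
    | exact (integrable_const 1).sub (hlin.const_mul _)
    | exact (hsq.add (integrable_const _)).const_mul _

lemma measurable_gMax (ε : Fin L) : Measurable (gMax L ε) :=
  Measurable.ite (by measurability) measurable_const measurable_const

lemma gMax_eq_ite {χ : Fin L → ℝ} (hχ : Function.Injective χ) {ε₀ : Fin L}
    (hε₀ : ∀ ℓ, χ ℓ ≤ χ ε₀) (ε : Fin L) : gMax L ε χ = if ε = ε₀ then (L : ℝ) else 0 := by
  unfold gMax
  by_cases hε : ε = ε₀
  · subst hε
    rw [if_pos rfl]
    exact if_pos fun ℓ hℓ => (hε₀ ℓ).lt_of_ne (hχ.ne hℓ)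
  · rw [if_neg hε, if_neg fun h => (h ε₀ (Ne.symm hε)).not_ge (hε₀ ε)]

lemma sum_gMax_mul_of_injective {χ : Fin L → ℝ} (hχ : Function.Injective χ) (ψ : ℝ → ℝ) :
    ∑ ε, gMax L ε χ * ψ (χ ε) = L * ψ (⨆ ℓ, χ ℓ) := by
  rcases Nat.eq_zero_or_pos L with rfl | hL
  · simp
  have : Nonempty (Fin L) := Fin.pos_iff_nonempty.1 hL
  obtain ⟨ε₀, hε₀⟩ := exists_eq_ciSup_of_finite (f := χ)
  have hmax : ∀ ℓ, χ ℓ ≤ χ ε₀ := fun ℓ => hε₀ ▸ le_ciSup (Finite.bddAbove_range χ) ℓ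
  simp [gMax_eq_ite hχ hmax, hε₀]

lemma linRiskMax_eq (hL : 0 < L) (mk mv Rk Rv : ℝ) :
    linRiskMax L mk mv Rk Rv
      = 1 - 2 * mv * (1 + mk * fmax L) + (mv ^ 2 + Rv ^ 2) * (L * (1 + mk ^ 2 + Rk ^ 2)) := by
  have : Nonempty (Fin L) := Fin.pos_iff_nonempty.1 hL
  have := nullSingletonClass_gaussianReal 0 one_ne_zero
  have hint : ∀ ε, Integrable (fun χ => gMax L ε χ * condRisk L mk mv Rk Rv χ (χ ε))
      (stdGaussian L) := fun ε =>
    (integrable_condRisk mk mv Rk Rv ((memLp_eval_gaussianPi ε).integrable one_le_two)).bdd_mul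
      (measurable_gMax ε).aestronglyMeasurable (c := L)
      (.of_forall fun χ => by unfold gMax; split_ifs <;> simp)
  have hsum : ∀ᵐ χ ∂stdGaussian L, ∑ ε, gMax L ε χ * condRisk L mk mv Rk Rv χ (χ ε)
      = L * condRisk L mk mv Rk Rv χ (⨆ ℓ, χ ℓ) :=
    (Measure.ae_injective_pi _).mono fun χ hχ => sum_gMax_mul_of_injective hχ _
  rw [linRiskMax]
  simp_rw [integral_const_mul, integral_integral_integral_sq_residual]
  rw [← integral_finsetSum _ fun ε _ => hint ε, integral_congr_ae hsum, integral_const_mul,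
    integral_condRisk _ _ _ _ integrable_iSup_eval_gaussianPi, ← mul_assoc,
    inv_mul_cancel₀ (by positivity), one_mul, fmax]

lemma sub_one_add_sq_div_le_linRiskMax (hL : 0 < L) (mk mv Rk Rv : ℝ) :
    1 - (1 + fmax L ^ 2) / L ≤ linRiskMax L mk mv Rk Rv := by
  rw [linRiskMax_eq hL]
  set f := fmax L
  set W := 1 + mk ^ 2 + Rk ^ 2
  set a := mv * L
  have hL' : (0 : ℝ) < L := by exact_mod_cast hL
  have hW : 0 < W := by positivity
  have hCS : (1 + mk * f) ^ 2 ≤ (1 + f ^ 2) * W := by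
    nlinarith [sq_nonneg (f - mk), sq_nonneg (f * Rk), sq_nonneg Rk]
  have hQ : 0 ≤ (1 + f ^ 2) - 2 * a * (1 + mk * f) + a ^ 2 * W := by
    refine (mul_nonneg_iff_of_pos_left hW).1 ?_
    have : W * ((1 + f ^ 2) - 2 * a * (1 + mk * f) + a ^ 2 * W)
        = (a * W - (1 + mk * f)) ^ 2 + ((1 + f ^ 2) * W - (1 + mk * f) ^ 2) := by ring
    rw [this]
    exact add_nonneg (sq_nonneg _) (sub_nonneg.2 hCS)
  calc 1 - (1 + f ^ 2) / L
      = 1 - 2 * mv * (1 + mk * f) + mv ^ 2 * (L * W)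
        - ((1 + f ^ 2) - 2 * a * (1 + mk * f) + a ^ 2 * W) / L := by
        field_simp; ring
    _ ≤ 1 - 2 * mv * (1 + mk * f) + mv ^ 2 * (L * W) := sub_le_self _ (div_nonneg hQ hL'.le)
    _ ≤ 1 - 2 * mv * (1 + mk * f) + (mv ^ 2 + Rv ^ 2) * (L * W) := by
        gcongr; nlinarith [sq_nonneg Rv]

lemma linRiskMax_fmax_inv (hL : 0 < L) :
    linRiskMax L (fmax L) (L : ℝ)⁻¹ 0 0 = 1 - (1 + fmax L ^ 2) / L := by
  rw [linRiskMax_eq hL]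
  field_simp
  ring

lemma isLeast_linRiskMax (hL : 0 < L) :
    IsLeast {r : ℝ | ∃ mk mv Rk Rv : ℝ, r = linRiskMax L mk mv Rk Rv}
      (1 - (1 + fmax L ^ 2) / L) := by
  refine ⟨⟨fmax L, (L : ℝ)⁻¹, 0, 0, (linRiskMax_fmax_inv hL).symm⟩, ?_⟩
  rintro r ⟨mk, mv, Rk, Rv, rfl⟩
  exact sub_one_add_sq_div_le_linRiskMax hL mk mv Rk Rv

lemma fmax_sq_le_two_mul_log (hL : 0 < L) : fmax L ^ 2 ≤ 2 * log L := by
  have : Nonempty (Fin L) := Fin.pos_iff_nonempty.1 hL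
  have h := sq_integral_iSup_le_two_mul_log (ι := Fin L)
  rwa [Fintype.card_fin] at h

end Risk

lemma isBigO_one_add_fmax_sq_div :
    (fun L : ℕ => (1 + fmax L ^ 2) / L) =O[atTop] fun L : ℕ => log L / L := by
  refine IsBigO.of_bound 3 (eventually_atTop.2 ⟨3, fun L hL => ?_⟩)
  have hL3 : (3 : ℝ) ≤ L := by exact_mod_cast hL
  have hlog : 1 ≤ log L := by
    rw [le_log_iff_exp_le (by linarith)]
    linarith [exp_one_lt_d9]
  have hf := fmax_sq_le_two_mul_log (by omega : 0 < L)
  rw [norm_of_nonneg (by positivity), norm_of_nonneg (by positivity), ← mul_div_assoc]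
  gcongr
  linarith

/-- on max-SLR at `ν = ∞` with deterministic length `L`, the
minimal population risk of linear attention equals `1 − (1 + f(L)²)/L`, and
since `f(L) = O(√(log L))` this risk is `1 − O((log L)/L)` as `L → ∞`. -/
theorem stmt6 :
    (∀ L : ℕ, 1 ≤ L →
      sInf {r : ℝ | ∃ mk mv Rk Rv : ℝ, r = linRiskMax L mk mv Rk Rv}
        = 1 - (1 + fmax L ^ 2) / (L : ℝ)) ∧
    (fun L : ℕ => (1 + fmax L ^ 2) / (L : ℝ))
      =O[atTop] fun L : ℕ => Real.log L / (L : ℝ) :=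
  ⟨fun _ hL => (isLeast_linRiskMax hL).csInf_eq, isBigO_one_add_fmax_sq_div⟩
end

section
/- The population risk of the attention estimator f_{σ,k,v}(X) = σ(Xk/√D)ᵀ(Xv/√D), under the SLR data model with hidden directions k*, v*, depends on (k, v) only through the seven scalars m_{kk*} = kᵀk*/D, m_{vv*} = vᵀv*/D, m_{kv*} = kᵀv*/D, m_{vk*} = vᵀk*/D, q_{kk} = ‖k‖²/D, q_{vv} = ‖v‖²/D, q_{vk} = kᵀv/D, in the limit D → ∞. Concretely, conditionally on L, the joint law of (Xk/√D, Xv/√D, Xk*/√D, Xv*/√D) is Gaussian with covariance determined by these seven parameters (and the unit normalizations of k*, v*), hence the risk is a function of them. -/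
/-!
Rotations of `ℝ^D` preserve the standard Gaussian, and the risk sees each token `x` only through
the projections `⟪x, k*⟫, ⟪x, v*⟫, ⟪x, k⟫, ⟪x, v⟫`. If `(k*, v*, k, v)` and `(k*, v*, k', v')`
have the same Gram matrix, some orthogonal `T` maps the first family to the second; substituting
`X ↦ XTᵀ` token by token leaves the law of `X` unchanged and turns the risk at `(k', v')` into
the risk at `(k, v)`.
-/

open MeasureTheory ProbabilityTheory Real

/-- Law of `L` i.i.d. standard Gaussian tokens in `ℝ^D`. -/
noncomputable def tokenGaussian (L D : ℕ) : Measure (Fin L → Fin D → ℝ) :=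
  Measure.pi fun _ => Measure.pi fun _ => gaussianReal 0 1

/-- Population risk of the attention estimator
`f_{σ,k,v}(X) = σ(Xk/√D)ᵀ(Xv/√D)` under the SLR model with hidden directions
`k*, v*` and weight `g`, label `y = (Xv*/√D)_ε`. -/
noncomputable def attRisk (L D : ℕ) (g : Fin L → (Fin L → ℝ) → ℝ)
    (σ : (Fin L → ℝ) → (Fin L → ℝ)) (kstar vstar k v : Fin D → ℝ) : ℝ :=
  (L : ℝ)⁻¹ * ∑ ε : Fin L, ∫ X,
    g ε (fun ℓ => (∑ i, X ℓ i * kstar i) / Real.sqrt D) *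
      ((∑ i, X ε i * vstar i) / Real.sqrt D
        - ∑ ℓ, σ (fun ℓ' => (∑ i, X ℓ' i * k i) / Real.sqrt D) ℓ *
            ((∑ i, X ℓ i * v i) / Real.sqrt D)) ^ 2
    ∂tokenGaussian L D

open scoped InnerProductSpace

section Gram

variable {𝕜 E ι : Type*} [RCLike 𝕜] [NormedAddCommGroup E] [InnerProductSpace 𝕜 E] [Fintype ι]

theorem norm_linearCombination_eq_of_gram_eq {w w' : ι → E} (h : Matrix.gram 𝕜 w = Matrix.gram 𝕜 w')
    (c : ι → 𝕜) :
    ‖Fintype.linearCombination 𝕜 w c‖ = ‖Fintype.linearCombination 𝕜 w' c‖ := by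
  simp only [Fintype.linearCombination_apply, norm_eq_sqrt_re_inner (𝕜 := 𝕜),
    ← Matrix.star_dotProduct_gram_mulVec, h]

theorem exists_linearIsometryEquiv_apply_eq_of_gram_eq [FiniteDimensional 𝕜 E] {w w' : ι → E}
    (h : Matrix.gram 𝕜 w = Matrix.gram 𝕜 w') : ∃ T : E ≃ₗᵢ[𝕜] E, ∀ i, T (w i) = w' i := by
  classical
  set A := Fintype.linearCombination 𝕜 w
  set B := Fintype.linearCombination 𝕜 w'
  have hnorm := norm_linearCombination_eq_of_gram_eq h
  have hker : LinearMap.ker A ≤ LinearMap.ker B := fun c hc => by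
    rwa [LinearMap.mem_ker, ← norm_eq_zero, ← hnorm, norm_eq_zero]
  set f : LinearMap.range A →ₗ[𝕜] E := (LinearMap.ker A).liftQ B hker ∘ₗ A.quotKerEquivRange.symm
  have hf : ∀ c, f ⟨A c, LinearMap.mem_range_self A c⟩ = B c := fun c => by
    simp [f]
  let F : LinearMap.range A →ₗᵢ[𝕜] E :=
    { toLinearMap := f
      norm_map' := by
        rintro ⟨_, c, rfl⟩
        rw [hf, ← hnorm]
        rfl }
  refine ⟨F.extend.toLinearIsometryEquiv rfl, fun i => ?_⟩
  have hw : A (Pi.single i 1) = w i := by simp [A, Fintype.linearCombination_apply_single]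
  have hw' : B (Pi.single i 1) = w' i := by simp [B, Fintype.linearCombination_apply_single]
  rw [LinearIsometry.toLinearIsometryEquiv_apply, ← hw, ← hw', ← hf]
  exact F.extend_apply ⟨_, LinearMap.mem_range_self A _⟩

end Gram

namespace LinearIsometryEquiv

variable {ι : Type*} [Fintype ι] (T : EuclideanSpace ℝ ι ≃ₗᵢ[ℝ] EuclideanSpace ℝ ι)

noncomputable def toPiMeasurableEquiv : (ι → ℝ) ≃ᵐ (ι → ℝ) :=
  (MeasurableEquiv.toLp 2 (ι → ℝ)).trans
    (T.toHomeomorph.toMeasurableEquiv.trans (MeasurableEquiv.toLp 2 (ι → ℝ)).symm)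

theorem toPiMeasurableEquiv_apply (x : ι → ℝ) :
    T.toPiMeasurableEquiv x = WithLp.ofLp (T (WithLp.toLp 2 x)) :=
  rfl

theorem measurePreserving_toPiMeasurableEquiv :
    MeasurePreserving T.toPiMeasurableEquiv (Measure.pi fun _ => gaussianReal 0 1)
      (Measure.pi fun _ => gaussianReal 0 1) := by
  have hstd : (Measure.pi fun _ : ι => gaussianReal 0 1)
      = (stdGaussian (EuclideanSpace ℝ ι)).map WithLp.ofLp := by
    rw [← map_pi_eq_stdGaussian, Measure.map_map (by fun_prop) (by fun_prop)]
    exact Measure.map_id.symm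
  refine ⟨T.toPiMeasurableEquiv.measurable, ?_⟩
  rw [hstd, Measure.map_map (by fun_prop) (by fun_prop)]
  have hcomm : ⇑T.toPiMeasurableEquiv ∘ WithLp.ofLp = WithLp.ofLp ∘ T := rfl
  rw [hcomm, ← Measure.map_map (by fun_prop) T.continuous.measurable, stdGaussian_map]

theorem sum_toPiMeasurableEquiv_mul {y y' : ι → ℝ} (hy : T (WithLp.toLp 2 y) = WithLp.toLp 2 y')
    (x : ι → ℝ) : ∑ i, T.toPiMeasurableEquiv x i * y' i = ∑ i, x i * y i := by
  have hdot : ∀ a b : ι → ℝ, ∑ i, a i * b i = ⟪WithLp.toLp 2 b, WithLp.toLp 2 a⟫_ℝ := fun a b => by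
    simp [EuclideanSpace.inner_toLp_toLp, dotProduct]
  rw [hdot, hdot, ← hy, toPiMeasurableEquiv_apply, WithLp.toLp_ofLp, inner_map_map]

end LinearIsometryEquiv

theorem measurePreserving_tokenGaussian {L D : ℕ}
    (T : EuclideanSpace ℝ (Fin D) ≃ₗᵢ[ℝ] EuclideanSpace ℝ (Fin D)) :
    MeasurePreserving (MeasurableEquiv.piCongrRight fun _ : Fin L => T.toPiMeasurableEquiv)
      (tokenGaussian L D) (tokenGaussian L D) :=
  measurePreserving_pi _ _ fun _ => T.measurePreserving_toPiMeasurableEquiv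

theorem attRisk_eq_of_linearIsometryEquiv {L D : ℕ} (g : Fin L → (Fin L → ℝ) → ℝ)
    (σ : (Fin L → ℝ) → (Fin L → ℝ)) {kstar vstar k v k' v' : Fin D → ℝ}
    (T : EuclideanSpace ℝ (Fin D) ≃ₗᵢ[ℝ] EuclideanSpace ℝ (Fin D))
    (hkstar : T (WithLp.toLp 2 kstar) = WithLp.toLp 2 kstar)
    (hvstar : T (WithLp.toLp 2 vstar) = WithLp.toLp 2 vstar)
    (hk : T (WithLp.toLp 2 k) = WithLp.toLp 2 k') (hv : T (WithLp.toLp 2 v) = WithLp.toLp 2 v') :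
    attRisk L D g σ kstar vstar k v = attRisk L D g σ kstar vstar k' v' := by
  unfold attRisk
  congr 1
  refine Finset.sum_congr rfl fun ε _ => ?_
  have hΦ : ∀ X ℓ, (MeasurableEquiv.piCongrRight fun _ : Fin L => T.toPiMeasurableEquiv) X ℓ
      = T.toPiMeasurableEquiv (X ℓ) := fun _ _ => rfl
  conv_rhs => rw [← (measurePreserving_tokenGaussian T).integral_comp']
  simp only [hΦ, T.sum_toPiMeasurableEquiv_mul hkstar,
    T.sum_toPiMeasurableEquiv_mul hvstar, T.sum_toPiMeasurableEquiv_mul hk,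
    T.sum_toPiMeasurableEquiv_mul hv]

theorem stmt16_general (L D : ℕ)
    (g : Fin L → (Fin L → ℝ) → ℝ)
    (σ : (Fin L → ℝ) → (Fin L → ℝ))
    (kstar vstar : Fin D → ℝ)
    (k v k' v' : Fin D → ℝ)
    (h1 : ∑ i, k i * kstar i = ∑ i, k' i * kstar i)
    (h2 : ∑ i, v i * vstar i = ∑ i, v' i * vstar i)
    (h3 : ∑ i, k i * vstar i = ∑ i, k' i * vstar i)
    (h4 : ∑ i, v i * kstar i = ∑ i, v' i * kstar i)
    (h5 : ∑ i, k i ^ 2 = ∑ i, k' i ^ 2)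
    (h6 : ∑ i, v i ^ 2 = ∑ i, v' i ^ 2)
    (h7 : ∑ i, k i * v i = ∑ i, k' i * v' i) :
    attRisk L D g σ kstar vstar k v = attRisk L D g σ kstar vstar k' v' := by
  have hgram : Matrix.gram ℝ (fun j => WithLp.toLp 2 (![kstar, vstar, k, v] j))
      = Matrix.gram ℝ (fun j => WithLp.toLp 2 (![kstar, vstar, k', v'] j)) := by
    -- the entries are the overlaps up to the order of the factors, which `mul_comm` normalizes
    simp only [mul_comm] at h1 h2 h3 h4 h7
    ext i j
    fin_cases i <;> fin_cases j <;>
      simp [Matrix.gram_apply, EuclideanSpace.inner_toLp_toLp, EuclideanSpace.norm_eq, dotProduct,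
        mul_comm, h1, h2, h3, h4, h5, h6, h7]
  obtain ⟨T, hT⟩ := exists_linearIsometryEquiv_apply_eq_of_gram_eq hgram
  exact attRisk_eq_of_linearIsometryEquiv g σ T (hT 0) (hT 1) (hT 2) (hT 3)

/-- the population risk of the attention estimator depends on
`(k, v)` only through the seven overlaps `kᵀk*/D, vᵀv*/D, kᵀv*/D, vᵀk*/D,
‖k‖²/D, ‖v‖²/D, kᵀv/D`: if two parameter pairs have the same overlaps, their
risks coincide. -/
theorem stmt16 (L D : ℕ) (hL : 1 ≤ L) (hD : 1 ≤ D)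
    (g : Fin L → (Fin L → ℝ) → ℝ) (hg_meas : ∀ ε, Measurable (g ε))
    (σ : (Fin L → ℝ) → (Fin L → ℝ)) (hσ_meas : Measurable σ)
    (kstar vstar : Fin D → ℝ)
    (hk : ∑ i, kstar i ^ 2 = (D : ℝ)) (hv : ∑ i, vstar i ^ 2 = (D : ℝ))
    (hkv : ∑ i, kstar i * vstar i = 0)
    (k v k' v' : Fin D → ℝ)
    (h1 : ∑ i, k i * kstar i = ∑ i, k' i * kstar i)
    (h2 : ∑ i, v i * vstar i = ∑ i, v' i * vstar i)
    (h3 : ∑ i, k i * vstar i = ∑ i, k' i * vstar i)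
    (h4 : ∑ i, v i * kstar i = ∑ i, v' i * kstar i)
    (h5 : ∑ i, k i ^ 2 = ∑ i, k' i ^ 2)
    (h6 : ∑ i, v i ^ 2 = ∑ i, v' i ^ 2)
    (h7 : ∑ i, k i * v i = ∑ i, k' i * v' i) :
    attRisk L D g σ kstar vstar k v = attRisk L D g σ kstar vstar k' v' :=
  stmt16_general L D g σ kstar vstar k v k' v' h1 h2 h3 h4 h5 h6 h7
end
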